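/- arXiv:1412.3366 — 7 statements merged into one kernel-verified Lean document; each statement's English description precedes it below -/
import Mathlib

section
/- Let Γ be a group and let (G_i)_{i ∈ ι} be a family of finite groups equipped with surjective homomorphisms φ_i : Γ → G_i. Assume that the intersection of the kernels of the φ_i is trivial (i.e. Γ is residually-{G_i}) and that the Frattini subgroup Φ(G_i) is trivial for every i. Then Φ_f(Γ) is trivial. -/
/-- `phiF G` is the intersection of all maximal subgroups of finite index in `G`
(equal to `G` itself, i.e. `⊤`, if there are no such subgroups). -/
def phiF (G : Type*) [Group G] : Subgroup G :=
  ⨅ M ∈ {M : Subgroup G | IsCoatom M ∧ M.FiniteIndex}, M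

/-- If `Γ` is residually-`{G i}` where each `G i` is a finite
group with trivial Frattini subgroup, then `Φ_f(Γ)` is trivial. -/
theorem phiF_eq_bot_of_residually {Γ : Type*} [Group Γ] {ι : Type*}
    (G : ι → Type*) [∀ i, Group (G i)] [∀ i, Finite (G i)]
    (φ : ∀ i, Γ →* G i) (hsurj : ∀ i, Function.Surjective (φ i))
    (hres : (⨅ i, (φ i).ker) = ⊥)
    (hfrat : ∀ i, frattini (G i) = ⊥) :
    phiF Γ = ⊥ := by
  rw [eq_bot_iff, ← hres]
  refine le_iInf fun i => ?_
  have : (φ i).ker = Subgroup.comap (φ i) (frattini (G i)) := by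
    rw [hfrat i, MonoidHom.comap_bot]
  rw [this, frattini, Order.radical, Subgroup.comap_iInf, le_iInf_iff]
  intro M
  rw [Subgroup.comap_iInf, le_iInf_iff]
  intro hM
  have hcoatom : IsCoatom (Subgroup.comap (φ i) M) :=
    Subgroup.isCoatom_comap_of_surjective (hsurj i) hM
  have hfi : (Subgroup.comap (φ i) M).FiniteIndex := by
    constructor
    rw [Subgroup.index_comap_of_surjective M (hsurj i)]
    exact Subgroup.index_ne_zero_of_finite
  exact biInf_le _ ⟨hcoatom, hfi⟩
end

section
/- Let Γ be a group and let (G_i)_{i ∈ ι} be a family of finite groups equipped with surjective homomorphisms φ_i : Γ → G_i. Assume that the intersection of the kernels of the φ_i is trivial (i.e. Γ is residually-{G_i}) and that the Frattini subgroup Φ(G_i) is trivial for every i. Then Φ(Γ) is trivial. -/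
/-- If `Γ` is residually-`{G i}` where each `G i` is a finite
group with trivial Frattini subgroup, then `Φ(Γ)` is trivial. Here `frattini`
is the intersection of all maximal subgroups (the whole group if none exist). -/
theorem frattini_eq_bot_of_residually {Γ : Type*} [Group Γ] {ι : Type*}
    (G : ι → Type*) [∀ i, Group (G i)] [∀ i, Finite (G i)]
    (φ : ∀ i, Γ →* G i) (hsurj : ∀ i, Function.Surjective (φ i))
    (hres : (⨅ i, (φ i).ker) = ⊥)
    (hfrat : ∀ i, frattini (G i) = ⊥) :
    frattini Γ = ⊥ := by
  rw [← hres]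
  refine le_antisymm (le_iInf fun i => ?_) (hres ▸ bot_le)
  have h := frattini_le_comap_frattini_of_surjective (hsurj i)
  rwa [hfrat i, MonoidHom.comap_bot] at h
end

section
/- Let N be a normal subgroup of a group Γ. Then Φ_f(N), viewed as a subgroup of Γ via the inclusion N ≤ Γ, is contained in Φ_f(Γ). -/
open Subgroup

section Lattice

variable {G : Type*} [Group G]

theorem Subgroup.normal_sup_inf_assoc {A : Subgroup G} [A.Normal] (B : Subgroup G)
    {C : Subgroup G} (h : A ≤ C) : A ⊔ B ⊓ C = (A ⊔ B) ⊓ C := by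
  apply SetLike.coe_injective
  rw [coe_inf (A ⊔ B), normal_mul, normal_mul, mul_inf_assoc _ _ _ h]

theorem Subgroup.exists_isCoatom_le_of_finiteIndex (H : Subgroup G) [H.FiniteIndex]
    (hH : H ≠ ⊤) : ∃ M, IsCoatom M ∧ H ≤ M := by
  obtain ⟨M, ⟨hHM, hM⟩, hmin⟩ :=
    (measure fun K : Subgroup G ↦ K.index).wf.has_min {K | H ≤ K ∧ K ≠ ⊤} ⟨H, le_rfl, hH⟩
  have := finiteIndex_of_le hHM
  refine ⟨M, ⟨hM, fun L hML ↦ ?_⟩, hHM⟩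
  by_contra hL
  exact hmin L ⟨hHM.trans hML.le, hL⟩ (index_strictAnti hML)

end Lattice

section PhiF

variable {G H : Type*} [Group G] [Group H]

theorem le_phiF_iff {K : Subgroup G} :
    K ≤ phiF G ↔ ∀ M : Subgroup G, IsCoatom M → M.FiniteIndex → K ≤ M := by
  simp [phiF]

theorem phiF_le {M : Subgroup G} (hM : IsCoatom M) [M.FiniteIndex] : phiF G ≤ M :=
  le_phiF_iff.mp le_rfl M hM ‹_›

theorem phiF_le_comap_phiF_of_surjective {φ : G →* H} (hφ : Function.Surjective φ) :
    phiF G ≤ (phiF H).comap φ := by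
  rw [← map_le_iff_le_comap, le_phiF_iff]
  intro M hM hMfin
  have : (M.comap φ).FiniteIndex := ⟨by rw [index_comap_of_surjective _ hφ]; exact hMfin.1⟩
  exact map_le_iff_le_comap.mpr (phiF_le (isCoatom_comap_of_surjective hφ hM))

instance phiF_characteristic : (phiF G).Characteristic :=
  characteristic_iff_le_comap.mpr fun φ ↦ phiF_le_comap_phiF_of_surjective φ.surjective

theorem eq_top_of_phiF_sup_eq_top {K : Subgroup G} [K.FiniteIndex] (h : phiF G ⊔ K = ⊤) :
    K = ⊤ := by
  by_contra hK
  obtain ⟨M, hM, hKM⟩ := K.exists_isCoatom_le_of_finiteIndex hK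
  have := finiteIndex_of_le hKM
  exact hM.1 (top_le_iff.mp (h ▸ sup_le (phiF_le hM) hKM))

end PhiF

/-- If `N` is a normal subgroup of `Γ`, then `Φ_f(N) ≤ Φ_f(Γ)`
(viewing `Φ_f(N)` as a subgroup of `Γ` via the inclusion). -/
theorem phiF_normal_le_phiF {Γ : Type*} [Group Γ] (N : Subgroup Γ) [N.Normal] :
    (phiF N).map N.subtype ≤ phiF Γ := by
  set P := (phiF N).map N.subtype
  rw [le_phiF_iff]
  intro M hM hMfin
  by_contra hPM
  have hPM_top : P ⊔ M = ⊤ := hM.2 _ (right_lt_sup.mpr hPM)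
  have hPN : P ≤ N := map_subtype_le _
  -- `normal_sup_inf_assoc` needs `P.Normal`: `Φ_f(N)` is characteristic in the normal subgroup `N`.
  have hN : P ⊔ M ⊓ N = N := by rw [normal_sup_inf_assoc M hPN, hPM_top, top_inf_eq]
  have hP : P.subgroupOf N = phiF N := comap_map_eq_self_of_injective N.subtype_injective _
  have hgen : phiF N ⊔ M.subgroupOf N = ⊤ := by
    rw [← hP, ← inf_subgroupOf_right M N, ← subgroupOf_sup hPN inf_le_right, hN, subgroupOf_self]
  have hNM : N ≤ M := subgroupOf_eq_top.mp (eq_top_of_phiF_sup_eq_top hgen)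
  exact hPM (hPN.trans hNM)
end

section
/- Let N be a finitely generated normal subgroup of a group G, and assume N is residually simple: for every non-trivial element x of N there exist a finite non-abelian simple group S and a surjective homomorphism f : N → S with f(x) ≠ 1. Then N ∩ Φ_f(G) is trivial. -/
/-- A group `N` is residually simple if every non-trivial element survives in
some finite non-abelian simple quotient. -/
def IsResiduallySimple (N : Type*) [Group N] : Prop :=
  ∀ x : N, x ≠ 1 → ∃ (S : Type) (_ : Group S), Finite S ∧ IsSimpleGroup S ∧
    (¬ ∀ a b : S, a * b = b * a) ∧ ∃ f : N →* S, Function.Surjective f ∧ f x ≠ 1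

open Subgroup Function

section

variable {G H S : Type*} [Group G] [Group H] [Group S]

theorem finite_monoidHom_of_fg [Finite S] (hH : Group.FG H) : Finite (H →* S) := by
  obtain ⟨T, hT, hTfin⟩ := Group.fg_iff.mp hH
  have : Finite T := hTfin
  refine Finite.of_injective (fun f : H →* S => fun t : T => f t) fun f g hfg => ?_
  exact MonoidHom.eq_of_eqOn_dense hT fun t ht => congrFun hfg ⟨t, ht⟩

theorem phiF_le_comap_frattini [Finite H] {φ : G →* H} (hφ : Surjective φ) :
    phiF G ≤ (frattini H).comap φ := by
  simp_rw [phiF, frattini, Order.radical, comap_iInf, le_iInf_iff]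
  intro M hM
  refine biInf_le _ ⟨isCoatom_comap_of_surjective hφ hM, ⟨?_⟩⟩
  rw [M.index_comap_of_surjective hφ]
  exact FiniteIndex.index_ne_zero

theorem IsSimpleGroup.le_ker_of_isSolvable [IsSimpleGroup S] (hS : ¬ Group.IsSolvable S)
    {g : H →* S} (hg : Surjective g) (B : Subgroup H) [B.Normal] [Group.IsSolvable B] :
    B ≤ g.ker := by
  rcases (Normal.map ‹B.Normal› g hg).eq_bot_or_eq_top with hbot | htop
  · rwa [Subgroup.map_eq_bot_iff] at hbot
  · refine absurd (Group.isSolvable_of_surjective (f := g.comp B.subtype) ?_) hS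
    rw [← MonoidHom.range_eq_top, MonoidHom.range_comp, range_subtype, htop]

theorem IsSimpleGroup.comap_le_ker_of_isSolvable {W : Type*} [Group W] [IsSimpleGroup S]
    (hS : ¬ Group.IsSolvable S) {θ : H →* W} (hθ : Surjective θ) {f : H →* S}
    (hf : Surjective f) (hker : θ.ker ≤ f.ker) (B : Subgroup W) [B.Normal] [Group.IsSolvable B] :
    B.comap θ ≤ f.ker := by
  set f' := θ.liftOfRightInverse _ (rightInverse_surjInv hθ) ⟨f, hker⟩
  have hf' : f'.comp θ = f := θ.liftOfRightInverse_comp _ _ ⟨f, hker⟩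
  have hf'surj : Surjective f' := .of_comp (hf'.symm ▸ hf : Surjective (f'.comp θ))
  rw [← hf', ← MonoidHom.comap_ker]
  exact comap_mono (le_ker_of_isSolvable hS hf'surj B)

theorem IsSimpleGroup.center_eq_bot [IsSimpleGroup S] (hS : ¬ ∀ a b : S, a * b = b * a) :
    center S = ⊥ :=
  (inferInstance : (center S).Normal).eq_bot_or_eq_top.resolve_right fun h =>
    hS fun a b => mem_center_iff.mp (h ▸ mem_top b) a

def conjPrecompPerm (N : Subgroup G) [N.Normal] (S : Type*) [Group S] :
    G →* Equiv.Perm (N →* S) where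
  toFun g := MulEquiv.monoidHomCongrLeftEquiv (MulAut.conjNormal g)
  map_one' := by rw [map_one]; rfl
  map_mul' g g' := by rw [map_mul]; rfl

theorem map_eq_one_of_mem_ker_conjPrecompPerm {N : Subgroup G} [N.Normal] {f : N →* S}
    (hf : Surjective f) (hS : center S = ⊥) {c : N} (hc : (c : G) ∈ (conjPrecompPerm N S).ker) :
    f c = 1 := by
  have hconj (n : N) : f (c⁻¹ * n * c) = f n := by
    simpa [conjPrecompPerm, MulAut.conjNormal_val] using
      DFunLike.congr_fun (DFunLike.congr_fun hc f) n
  rw [← mem_bot, ← hS, mem_center_iff]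
  intro s
  obtain ⟨n, rfl⟩ := hf s
  simpa [mul_assoc, inv_mul_eq_iff_eq_mul] using hconj n

end

/-- If `N` is a finitely generated normal subgroup of `G` which is
residually simple, then `N ∩ Φ_f(G)` is trivial. -/
theorem inf_phiF_eq_bot_of_residuallySimple {G : Type*} [Group G]
    (N : Subgroup G) [N.Normal] (hfg : Group.FG N)
    (hres : IsResiduallySimple N) :
    N ⊓ phiF G = ⊥ := by
  refine eq_bot_iff.mpr fun x ⟨hxN, hxΦ⟩ => by_contra fun hx => ?_
  obtain ⟨S, _, _, _, hcomm, f, hf, hfx⟩ := hres ⟨x, hxN⟩ <| by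
    simpa [Subtype.ext_iff] using hx
  have hS : ¬ Group.IsSolvable S := IsSimpleGroup.comm_iff_isSolvable.not.mp hcomm
  have := finite_monoidHom_of_fg (S := S) hfg
  set C := (conjPrecompPerm N S).ker
  have : Finite (G ⧸ C) := inferInstance
  set φ := QuotientGroup.mk' C
  set W := N.map φ
  set θ : N →* W := φ.subgroupMap N
  have hker : θ.ker ≤ f.ker := fun n hn =>
    map_eq_one_of_mem_ker_conjPrecompPerm hf (IsSimpleGroup.center_eq_bot hcomm)
      ((QuotientGroup.eq_one_iff _).mp (congrArg Subtype.val hn))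
  have : Group.IsNilpotent (frattini (G ⧸ C)) := frattini_nilpotent
  have : Group.IsSolvable ((frattini (G ⧸ C)).comap W.subtype) :=
    Group.isSolvable_of_isSolvable_injective (f := W.subtype.subgroupComap (frattini (G ⧸ C)))
      fun _ _ h => Subtype.ext (Subtype.ext (congrArg Subtype.val h :))
  have hxΦC : φ x ∈ frattini (G ⧸ C) :=
    phiF_le_comap_frattini (QuotientGroup.mk'_surjective C) hxΦ
  exact hfx <| IsSimpleGroup.comap_le_ker_of_isSolvable hS (φ.subgroupMap_surjective N) hf hker
    ((frattini (G ⧸ C)).comap W.subtype) hxΦC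
end

section
/- Let N be a group and let K_0, K_1, …, K_n be normal subgroups of N such that each quotient N/K_i is a non-abelian finite simple group. Set K = K_0 ∩ K_1 ∩ ⋯ ∩ K_n. Then N/K is isomorphic to a direct product of non-abelian finite simple groups; more precisely, there is a subset I of {0, 1, …, n} such that N/K is isomorphic to the direct product of the groups N/K_i for i ∈ I. -/
open QuotientGroup Subgroup

/-!
Each `K i` is a maximal normal subgroup. Adding the `K i` one at a time, a new `K a` either
contains the intersection `L` of the previous ones, and the quotient does not change, or, by
maximality, `K a ⊔ L = ⊤`, and then `N ⧸ (K a ⊓ L) ≃* (N ⧸ K a) × (N ⧸ L)` by the Chinese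
remainder theorem for groups.
-/

namespace MonoidHom

theorem prod_surjective_of_sup_ker_eq_top {G A B : Type*} [Group G] [Group A] [Group B]
    {f : G →* A} {g : G →* B} (hf : Function.Surjective f) (hg : Function.Surjective g)
    (h : f.ker ⊔ g.ker = ⊤) : Function.Surjective (f.prod g) := by
  rintro ⟨a, b⟩
  obtain ⟨x, rfl⟩ := hf a
  obtain ⟨y, rfl⟩ := hg b
  have hxy : x⁻¹ * y ∈ ((f.ker ⊔ g.ker : Subgroup G) : Set G) := by simp [h]
  rw [mul_normal] at hxy
  obtain ⟨u, hu, v, hv, huv⟩ := hxy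
  refine ⟨x * u, Prod.ext ?_ ?_⟩
  · simp [mem_ker.mp hu]
  · have : x * u = y * v⁻¹ := by
      rw [eq_mul_inv_iff_mul_eq, mul_assoc, show u * v = x⁻¹ * y from huv, mul_inv_cancel_left]
    simp [this, mem_ker.mp hv]

end MonoidHom

instance Subgroup.normal_iInf {G : Type*} [Group G] {ι : Sort*} (K : ι → Subgroup G)
    [∀ i, (K i).Normal] : (⨅ i, K i).Normal :=
  normal_iInf_normal inferInstance

namespace QuotientGroup

variable {G : Type*} [Group G]

noncomputable def quotientInfEquivProdOfSupEqTop (H L : Subgroup G) [H.Normal] [L.Normal]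
    (h : H ⊔ L = ⊤) : G ⧸ (H ⊓ L) ≃* (G ⧸ H) × (G ⧸ L) :=
  have hker : ((mk' H).prod (mk' L)).ker = H ⊓ L := by rw [MonoidHom.ker_prod, ker_mk', ker_mk']
  (quotientMulEquivOfEq hker.symm).trans <| quotientKerEquivOfSurjective _ <|
    MonoidHom.prod_surjective_of_sup_ker_eq_top (mk'_surjective H) (mk'_surjective L)
      (by rwa [ker_mk', ker_mk'])

theorem sup_eq_top_of_isSimpleGroup {M H : Subgroup G} [M.Normal] [H.Normal]
    [IsSimpleGroup (G ⧸ M)] (hHM : ¬ H ≤ M) : M ⊔ H = ⊤ := by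
  have hmap : H.map (mk' M) = ⊤ :=
    ((Normal.map inferInstance _ (mk'_surjective M)).eq_bot_or_eq_top).resolve_left
      (by rwa [Subgroup.map_eq_bot_iff, ker_mk'])
  rw [sup_comm, ← ker_mk' M, ← comap_map_eq, hmap, comap_top]

end QuotientGroup

def MulEquiv.piFinsetInsert {ι : Type*} [DecidableEq ι] (M : ι → Type*) [∀ i, Mul (M i)]
    {a : ι} {s : Finset ι} (ha : a ∉ s) :
    ((i : (insert a s : Finset ι)) → M i) ≃* M a × ((i : s) → M i) where
  toEquiv := (Equiv.piCongrLeft' _ (Finset.subtypeInsertEquivOption ha)).trans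
    Equiv.piOptionEquivProd
  map_mul' _ _ := rfl

theorem exists_quotient_biInf_mulEquiv_pi_of_isSimpleGroup {G ι : Type*} [Group G]
    [DecidableEq ι] (K : ι → Subgroup G) [∀ i, (K i).Normal] [∀ i, IsSimpleGroup (G ⧸ K i)]
    (s : Finset ι) :
    ∃ I ⊆ s, Nonempty ((G ⧸ ⨅ i ∈ s, K i) ≃* ((i : I) → G ⧸ K i)) := by
  induction s using Finset.induction_on with
  | empty =>
    have := subsingleton_quotient_top (G := G)
    have : Unique (G ⧸ (⊤ : Subgroup G)) := uniqueOfSubsingleton 1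
    exact ⟨∅, subset_rfl, ⟨(quotientMulEquivOfEq (N := ⊤) (by simp)).trans MulEquiv.ofUnique⟩⟩
  | @insert a s has ih =>
    obtain ⟨I, hIs, ⟨e⟩⟩ := ih
    suffices ∃ J ⊆ insert a s, Nonempty ((G ⧸ K a ⊓ ⨅ i ∈ s, K i) ≃* ((i : J) → G ⧸ K i)) by
      obtain ⟨J, hJ, ⟨e'⟩⟩ := this
      exact ⟨J, hJ, ⟨(quotientMulEquivOfEq (Finset.iInf_insert a s K)).trans e'⟩⟩
    by_cases hle : ⨅ i ∈ s, K i ≤ K a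
    · exact ⟨I, hIs.trans (Finset.subset_insert a s),
        ⟨(quotientMulEquivOfEq (inf_eq_right.mpr hle)).trans e⟩⟩
    · have haI : a ∉ I := fun h => has (hIs h)
      exact ⟨insert a I, Finset.insert_subset_insert a hIs,
        ⟨(quotientInfEquivProdOfSupEqTop _ _ (sup_eq_top_of_isSimpleGroup hle)).trans <|
          ((MulEquiv.refl _).prodCongr e).trans
            (MulEquiv.piFinsetInsert (fun i => G ⧸ K i) haI).symm⟩⟩

theorem quotient_iInf_iso_pi_of_simple_general {N : Type*} [Group N] (n : ℕ)
    (K : Fin (n + 1) → Subgroup N) [∀ i, (K i).Normal] [(⨅ i, K i).Normal]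
    [∀ i, IsSimpleGroup (N ⧸ K i)] :
    ∃ I : Finset (Fin (n + 1)),
      Nonempty ((N ⧸ ⨅ i, K i) ≃* ((i : I) → N ⧸ K i.val)) := by
  obtain ⟨I, -, ⟨e⟩⟩ := exists_quotient_biInf_mulEquiv_pi_of_isSimpleGroup K Finset.univ
  exact ⟨I, ⟨(quotientMulEquivOfEq (by simp)).trans e⟩⟩

/-- If `K₀, …, Kₙ` are normal subgroups of `N` with each quotient
`N/Kᵢ` a non-abelian finite simple group, and `K = ⋂ᵢ Kᵢ`, then `N/K` is
isomorphic to the direct product of the groups `N/Kᵢ` for `i` in some subset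
`I` of `{0, …, n}`. -/
theorem quotient_iInf_iso_pi_of_simple {N : Type*} [Group N] (n : ℕ)
    (K : Fin (n + 1) → Subgroup N) [∀ i, (K i).Normal] [(⨅ i, K i).Normal]
    [∀ i, Finite (N ⧸ K i)] [∀ i, IsSimpleGroup (N ⧸ K i)]
    (hna : ∀ i, ¬ ∀ a b : N ⧸ K i, a * b = b * a) :
    ∃ I : Finset (Fin (n + 1)),
      Nonempty ((N ⧸ ⨅ i, K i) ≃* ((i : I) → N ⧸ K i.val)) :=
  quotient_iInf_iso_pi_of_simple_general n K
end

section
/- For any group G, the intersection Z(G) ∩ [G,G] of the center of G with the commutator subgroup of G is contained in Φ_f(G) (and hence also in Φ(G)). -/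
/-!
If a maximal subgroup `M` misses a central element, then `M ⊔ Z(G) = G`, so every element of
`G` is `m * z` with `m ∈ M` and `z` central. Central factors do not change commutators, hence
`[G, G] = [M, M] ≤ M`, and `Z(G) ∩ [G, G] ≤ M` in either case.
-/

section

variable {G : Type*} [Group G]

open scoped commutatorElement

theorem commutatorElement_mul_mem_center {a b z w : G} (hz : z ∈ Subgroup.center G)
    (hw : w ∈ Subgroup.center G) : ⁅a * z, b * w⁆ = ⁅a, b⁆ := by
  have hz₁ (c : G) : ⁅z, c⁆ = 1 := commutatorElement_eq_one_iff_commute.mpr (hz.comm c)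
  have hw₁ (c : G) : ⁅c, w⁆ = 1 := commutatorElement_eq_one_iff_commute.mpr (hw.comm c).symm
  simp only [commutatorElement_mul_left_eq_conj_mul, commutatorElement_mul_right_eq_mul_conj,
    hz₁, hw₁, mul_one, mul_inv_cancel, one_mul, mul_inv_cancel_right]

theorem commutator_le_commutator_of_sup_center_eq_top {M : Subgroup G}
    (h : M ⊔ Subgroup.center G = ⊤) : commutator G ≤ ⁅M, M⁆ := by
  rw [commutator_def, Subgroup.commutator_le]
  intro g _ g' _
  obtain ⟨m, hm, z, hz, rfl⟩ := Subgroup.mem_sup_of_normal_right.mp (h ▸ Subgroup.mem_top g)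
  obtain ⟨m', hm', z', hz', rfl⟩ := Subgroup.mem_sup_of_normal_right.mp (h ▸ Subgroup.mem_top g')
  rw [commutatorElement_mul_mem_center hz hz']
  exact Subgroup.commutator_mem_commutator hm hm'

theorem center_inf_commutator_le_of_isCoatom {M : Subgroup G} (hM : IsCoatom M) :
    Subgroup.center G ⊓ commutator G ≤ M := by
  by_cases hZ : Subgroup.center G ≤ M
  · exact inf_le_left.trans hZ
  · have hsup : M ⊔ Subgroup.center G = ⊤ := codisjoint_iff.mp (hM.not_le_iff_codisjoint.mp hZ)
    exact inf_le_right.trans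
      ((commutator_le_commutator_of_sup_center_eq_top hsup).trans M.commutator_le_self)

end

/-- For any group `G`, the intersection `Z(G) ∩ [G,G]` is
contained in `Φ_f(G)`, and also in the Frattini subgroup `Φ(G)`. -/
theorem center_inf_commutator_le_phiF {G : Type*} [Group G] :
    Subgroup.center G ⊓ commutator G ≤ phiF G ∧
      Subgroup.center G ⊓ commutator G ≤ frattini G :=
  ⟨le_iInf₂ fun _ hM => center_inf_commutator_le_of_isCoatom hM.1,
    le_iInf₂ fun _ hM => center_inf_commutator_le_of_isCoatom hM⟩
end

section
/- Let F_2 be the free group of rank 2. Then Φ_f(F_2) is trivial. -/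
open Equiv MulAction

theorem phiF_eq_bot_iff {G : Type*} [Group G] :
    phiF G = ⊥ ↔ ∀ g : G, g ≠ 1 → ∃ H : Subgroup G, IsCoatom H ∧ H.FiniteIndex ∧ g ∉ H := by
  simp only [phiF, Subgroup.eq_bot_iff_forall, Subgroup.mem_iInf, Set.mem_ofPred_eq, and_imp]
  refine forall_congr' fun g => ⟨fun h hg => ?_, fun h hmem => ?_⟩
  · by_contra! hH
    exact hg (h fun H hc hf => hH H hc hf)
  · by_contra hg
    obtain ⟨H, hc, hf, hgH⟩ := h hg
    exact hgH (hmem H hc hf)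

theorem MulAction.isCoatom_stabilizer_of_prime_card {G X : Type*} [Group G] [MulAction G X]
    [IsPretransitive G X] (hp : (Nat.card X).Prime) (x : X) : IsCoatom (stabilizer G x) := by
  have : Finite X := (Nat.card_ne_zero.mp hp.ne_zero).2
  have : Nontrivial X := Finite.one_lt_card_iff_nontrivial.mp hp.one_lt
  have : IsPreprimitive G X := IsPreprimitive.of_prime_card hp
  exact IsPreprimitive.isCoatom_stabilizer_of_isPreprimitive G x

section PartialMulLeft

variable {G : Type*} [Group G] (B : Set G)

def partialMulLeftEquiv (g : G) : {v : B // g * v ∈ B} ≃ {u : B // g⁻¹ * u ∈ B} where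
  toFun v := ⟨⟨g * v, v.2⟩, by simp [v.1.2]⟩
  invFun u := ⟨⟨g⁻¹ * u, u.2⟩, by simp [u.1.2]⟩
  left_inv v := by ext; simp
  right_inv u := by ext; simp

open scoped Classical in
noncomputable def partialMulLeftPerm [Finite B] (g : G) : Perm B :=
  (partialMulLeftEquiv B g).extendSubtype

theorem coe_partialMulLeftPerm_apply [Finite B] {g : G} {v : B} (h : g * v ∈ B) :
    (partialMulLeftPerm B g v : G) = g * v := by
  classical
  exact congrArg Subtype.val (extendSubtype_apply_of_mem (partialMulLeftEquiv B g) v h)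

end PartialMulLeft

namespace FreeGroup

variable {α : Type*}

section PartialMulLeftHom

variable (B : Set (FreeGroup α)) [Finite B]

noncomputable def partialMulLeftHom : FreeGroup α →* Perm B :=
  lift fun x => partialMulLeftPerm B (of x)

theorem coe_partialMulLeftHom_mk_singleton_apply (a : α × Bool) {v : B}
    (h : mk [a] * v ∈ B) : (partialMulLeftHom B (mk [a]) v : FreeGroup α) = mk [a] * v := by
  obtain ⟨x, _ | _⟩ := a
  · have hof : mk [(x, false)] = (of x)⁻¹ := rfl
    rw [hof] at h ⊢
    have hv : partialMulLeftPerm B (of x) ⟨(of x)⁻¹ * v, h⟩ = v :=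
      Subtype.ext (by rw [coe_partialMulLeftPerm_apply B (by simp)]; simp)
    rw [_root_.map_inv, partialMulLeftHom, lift_apply_of, Perm.inv_eq_iff_eq.mpr hv.symm]
  · exact coe_partialMulLeftPerm_apply B h

theorem coe_partialMulLeftHom_mk_apply_one :
    ∀ (L : List (α × Bool)) (hL : ∀ t, t <:+ L → mk t ∈ B),
      (partialMulLeftHom B (mk L) ⟨1, hL [] List.nil_suffix⟩ : FreeGroup α) = mk L
  | [], _ => by rw [← one_eq_mk, _root_.map_one]; rfl
  | a :: L, hL => by
    have hL' : ∀ t, t <:+ L → mk t ∈ B := fun t ht => hL t (ht.trans (List.suffix_cons a L))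
    have ih : partialMulLeftHom B (mk L) ⟨1, hL' [] List.nil_suffix⟩ =
        ⟨mk L, hL' L (List.suffix_refl L)⟩ :=
      Subtype.ext (coe_partialMulLeftHom_mk_apply_one L hL')
    rw [show mk (a :: L) = mk [a] * mk L from (mul_mk (L₁ := [a])).symm, _root_.map_mul,
      Perm.mul_apply, ih]
    exact coe_partialMulLeftHom_mk_singleton_apply B a
      (by rw [mul_mk]; exact hL _ (List.suffix_refl _))

end PartialMulLeftHom

def suffixSet (L : List (α × Bool)) : Set (FreeGroup α) :=
  Set.range fun k : Fin (L.length + 1) => mk (L.drop k)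

theorem mk_mem_suffixSet {t L : List (α × Bool)} (h : t <:+ L) : mk t ∈ suffixSet L :=
  ⟨⟨L.length - t.length, by omega⟩, congrArg mk (List.suffix_iff_eq_drop.mp h).symm⟩

instance (L : List (α × Bool)) : Finite (suffixSet L) := (Set.finite_range _).to_subtype

theorem IsReduced.card_suffixSet {L : List (α × Bool)} (hL : IsReduced L) :
    Nat.card (suffixSet L) = L.length + 1 := by
  classical
  rw [suffixSet, Nat.card_range_of_injective, Nat.card_fin]
  intro i j hij
  have hdrop := congrArg toWord hij
  simp only [toWord_mk, (hL.infix (List.drop_suffix _ _).isInfix).reduce_eq] at hdrop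
  have := congrArg List.length hdrop
  simp only [List.length_drop] at this
  omega

theorem IsReduced.exists_isCoatom_finiteIndex_suffix_notMem {L : List (α × Bool)}
    (hL : IsReduced L) (hp : (L.length + 1).Prime) :
    ∃ H : Subgroup (FreeGroup α), IsCoatom H ∧ H.FiniteIndex ∧
      ∀ t, t <:+ L → mk t ≠ 1 → mk t ∉ H := by
  let _ := MulAction.compHom (suffixSet L) (partialMulLeftHom (suffixSet L))
  let x₀ : suffixSet L := ⟨1, mk_mem_suffixSet List.nil_suffix⟩
  have smul_x₀ : ∀ t (ht : t <:+ L), mk t • x₀ = ⟨mk t, mk_mem_suffixSet ht⟩ := fun t ht =>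
    Subtype.ext (coe_partialMulLeftHom_mk_apply_one _ t fun s hs => mk_mem_suffixSet (hs.trans ht))
  have : IsPretransitive (FreeGroup α) (suffixSet L) := by
    refine (isPretransitive_iff_base x₀).mpr ?_
    rintro ⟨_, k, rfl⟩
    exact ⟨_, smul_x₀ _ (List.drop_suffix _ _)⟩
  have hcard : Nat.card (suffixSet L) = L.length + 1 := hL.card_suffixSet
  refine ⟨stabilizer _ x₀, isCoatom_stabilizer_of_prime_card (hcard ▸ hp) x₀,
    ⟨by rw [index_stabilizer_of_transitive, hcard]; exact hp.ne_zero⟩, fun t ht hne hmem => ?_⟩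
  rw [mem_stabilizer_iff, smul_x₀ t ht] at hmem
  exact hne (congrArg Subtype.val hmem)

theorem IsReduced.replicate_append {a : α × Bool} {L : List (α × Bool)} (h : IsReduced (a :: L))
    (n : ℕ) : IsReduced (List.replicate n a ++ a :: L) := by
  have hrep : IsReduced (List.replicate n a ++ [a]) := by
    rw [← List.replicate_succ']
    exact List.isChain_replicate_of_rel _ fun _ => rfl
  simpa using hrep.append_overlap h (List.cons_ne_nil a [])

theorem exists_isCoatom_finiteIndex_notMem {w : FreeGroup α} (hw : w ≠ 1) :
    ∃ H : Subgroup (FreeGroup α), IsCoatom H ∧ H.FiniteIndex ∧ w ∉ H := by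
  classical
  obtain ⟨a, L, hw_word⟩ := List.exists_cons_of_ne_nil (mt toWord_eq_nil_iff.mp hw)
  obtain ⟨p, hlen, hp⟩ := Nat.exists_infinite_primes (L.length + 2)
  have hred : IsReduced (List.replicate (p - 2 - L.length) a ++ w.toWord) := by
    rw [hw_word]
    exact (hw_word ▸ isReduced_toWord).replicate_append _
  obtain ⟨H, hc, hf, hH⟩ := hred.exists_isCoatom_finiteIndex_suffix_notMem (by
    rw [List.length_append, List.length_replicate, hw_word, List.length_cons,
      show p - 2 - L.length + (L.length + 1) + 1 = p by omega]
    exact hp)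
  refine ⟨H, hc, hf, ?_⟩
  rw [← mk_toWord (x := w)] at hw ⊢
  exact hH _ (List.suffix_append _ _) hw

end FreeGroup

/-- For the free group `F₂` of rank 2, `Φ_f(F₂)` is trivial. -/
theorem phiF_freeGroup_two_eq_bot :
    phiF (FreeGroup (Fin 2)) = ⊥ :=
  phiF_eq_bot_iff.mpr fun _ => FreeGroup.exists_isCoatom_finiteIndex_notMem
end
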